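/- Let A be a discrete connection form with D-type domain U, s : V → P a section over V ⊆ B, N ≥ 2, and m_• = (m₀,…,m_N) a discrete loop in B (m_N = m₀) such that (m₀,m_k,m_{k+1}) ∈ V''⁽³⁾ for all k = 0,…,N−1. Let q̄ ∈ π⁻¹(m₀), write q̄ = g₀ • s(m₀), and let q_• be the discrete horizontal lift of m_• starting at q̄ (with respect to h_A). Then HP(m_•,q̄) = g₀ · (∏_{k=1}^N A_s(m_{k-1},m_k)⁻¹) · g₀⁻¹ = ∏_{k=1}^{N−1} B_A(q₀,q_k,q_{k+1})⁻¹ (ordered products a₁·a₂·⋯·a_N). -/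

import Mathlib

/-!
Writing the lift in the coordinates of the section, `q_k = c_k • s(m_k)`, equivariance of `A`
shows that each horizontal step multiplies `c_k` on the right by `A_s(m_k, m_{k+1})⁻¹`; closing
the loop gives `q_N = (c_N g₀⁻¹) • q̄`, and freeness identifies `κ(q̄, q_N)` with `c_N g₀⁻¹`.
For the curvature formula, horizontal steps satisfy `A(q_k, q_{k+1}) = 1`, so
`B_A(q₀, q_k, q_{k+1})⁻¹ = A(q₀, q_k)⁻¹ A(q₀, q_{k+1})` and the product telescopes to
`A(q₀, q_N) = κ(q₀, q_N)`.
-/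

namespace DiscreteConnection

variable {G P : Type*} [Group G]

def curvature (A : P → P → G) (q₀ q₁ q₂ : P) : G :=
  (A q₀ q₂)⁻¹ * A q₁ q₂ * A q₀ q₁

theorem prod_curvature_inv_eq_of_horizontal (A : P → P → G) (q : ℕ → P)
    (hA₀ : A (q 0) (q 0) = 1) (n : ℕ) (hhor : ∀ k < n, A (q k) (q (k + 1)) = 1) :
    ((List.range (n - 1)).map fun k => (curvature A (q 0) (q (k + 1)) (q (k + 2)))⁻¹).prod =
      A (q 0) (q n) := by
  induction n with
  | zero => simp [hA₀]
  | succ n ih =>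
    cases n with
    | zero => simp [hhor 0 one_pos]
    | succ n =>
      have ih := ih fun k hk => hhor k (by omega)
      rw [Nat.add_sub_cancel] at ih
      rw [Nat.add_sub_cancel, List.range_succ, List.map_append, List.prod_append, ih]
      simp only [List.map_cons, List.map_nil, List.prod_cons, List.prod_nil, curvature,
        hhor (n + 1) (by omega)]
      group

variable [MulAction G P]

theorem eq_of_smul_eq_smul_of_free (hfree : ∀ (g : G) (q : P), g • q = q → g = 1)
    {g h : G} {q : P} (hgh : g • q = h • q) : g = h :=
  (inv_mul_eq_one.mp (hfree (h⁻¹ * g) q (by rw [mul_smul, hgh, inv_smul_smul]))).symm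

section Equivariant

variable {U : Set (P × P)} {A : P → P → G}
  (hAequiv : ∀ q₀ q₁ : P, (q₀, q₁) ∈ U → ∀ g₀ g₁ : G,
    A (g₀ • q₀) (g₁ • q₁) = g₁ * A q₀ q₁ * g₀⁻¹)
include hAequiv

theorem apply_smul_self {q : P} (hq : (q, q) ∈ U) (hAq : A q q = 1) (g : G) :
    A q (g • q) = g := by
  simpa [hAq] using hAequiv q q hq 1 g

theorem apply_horizontalLift {q q' : P} (hq : (q, q') ∈ U) :
    A q ((A q q')⁻¹ • q') = 1 := by
  simpa using hAequiv q q' hq 1 (A q q')⁻¹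

theorem horizontalLift_smul_smul {s₀ s₁ : P} (hs : (s₀, s₁) ∈ U) (c h : G) :
    (A (c • s₀) (h • s₁))⁻¹ • h • s₁ = (c * (A s₀ s₁)⁻¹) • s₁ := by
  rw [hAequiv s₀ s₁ hs, smul_smul]
  group

theorem horizontalLift_eq_prod_smul_section {B : Type*} (s : B → P) (m : ℕ → B) (q : ℕ → P)
    (g₀ : G) (N : ℕ) (hq0 : q 0 = g₀ • s (m 0))
    (hsU : ∀ k < N, (s (m k), s (m (k + 1))) ∈ U)
    (hlift : ∀ k < N, ∃ h : G,
      q (k + 1) = (A (q k) (h • s (m (k + 1))))⁻¹ • h • s (m (k + 1))) :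
    ∀ k ≤ N, q k =
      (g₀ * ((List.range k).map fun j => (A (s (m j)) (s (m (j + 1))))⁻¹).prod) • s (m k) := by
  intro k hk
  induction k with
  | zero => simpa using hq0
  | succ k ih =>
    obtain ⟨h, hqk⟩ := hlift k hk
    rw [hqk, ih (by omega), horizontalLift_smul_smul hAequiv (hsU k hk), List.range_succ,
      List.map_append, List.prod_append]
    simp [mul_assoc]

end Equivariant

end DiscreteConnection

open DiscreteConnection

theorem discrete_holonomy_phase_formula_general
    {G : Type*} [Group G] {P : Type*} [MulAction G P] {B : Type*}
    (π : P → B)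
    (hfree : ∀ (g : G) (q : P), g • q = q → g = 1)
    (hπ : ∀ q₀ q₁ : P, π q₀ = π q₁ ↔ ∃ g : G, g • q₀ = q₁)
    (κ : P → P → G)
    (hκ : ∀ q₀ q₁ : P, π q₀ = π q₁ → κ q₀ q₁ • q₀ = q₁)
    (U : Set (P × P))
    (hUvert : ∀ q₀ q₁ : P, π q₀ = π q₁ → (q₀, q₁) ∈ U)
    (A : P → P → G)
    (hAid : ∀ q : P, A q q = 1)
    (hAequiv : ∀ q₀ q₁ : P, (q₀, q₁) ∈ U → ∀ g₀ g₁ : G,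
      A (g₀ • q₀) (g₁ • q₁) = g₁ * A q₀ q₁ * g₀⁻¹)
    -- the curvature of `A`
    (BA : P → P → P → G)
    (hBA : ∀ q₀ q₁ q₂ : P, BA q₀ q₁ q₂ = (A q₀ q₂)⁻¹ * A q₁ q₂ * A q₀ q₁)
    (V : Set B) (s : B → P) (hs : ∀ m ∈ V, π (s m) = m)
    (V'' : Set (B × B))
    (hV'' : V'' = {p : B × B | p.1 ∈ V ∧ p.2 ∈ V ∧ (s p.1, s p.2) ∈ U})
    -- a discrete loop `m_•` with all triples `(m₀, m_k, m_{k+1})` in `V''⁽³⁾`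
    (N : ℕ) (m : ℕ → B) (hloop : m N = m 0)
    (htr : ∀ k < N, ∀ x ∈ ({m 0, m k, m (k + 1)} : Set B),
      ∀ y ∈ ({m 0, m k, m (k + 1)} : Set B), (x, y) ∈ V'')
    -- `q̄ = g₀ • s(m₀)` and `q_•` is the discrete horizontal lift of `m_•`
    -- (with respect to `h_A`) starting at `q̄`
    (g₀ : G) (qbar : P) (hqbar : qbar = g₀ • s (m 0))
    (q : ℕ → P) (hq0 : q 0 = qbar)
    (hlift : ∀ k < N, ∃ q' : P, π q' = m (k + 1) ∧ (q k, q') ∈ U ∧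
      q (k + 1) = (A (q k) q')⁻¹ • q') :
    κ qbar (q N)
      = g₀ * (((List.range N).map
          (fun k => (A (s (m k)) (s (m (k + 1))))⁻¹)).prod) * g₀⁻¹ ∧
    κ qbar (q N)
      = ((List.range (N - 1)).map
          (fun k => (BA (q 0) (q (k + 1)) (q (k + 2)))⁻¹)).prod := by
  have hstep : ∀ k < N, (s (m k), s (m (k + 1))) ∈ U ∧ m (k + 1) ∈ V := by
    intro k hk
    have h := htr k hk (m k) (by simp) (m (k + 1)) (by simp)
    rw [hV''] at h
    exact ⟨h.2.2, h.2.1⟩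
  have hlift_section : ∀ k < N, ∃ h : G,
      q (k + 1) = (A (q k) (h • s (m (k + 1))))⁻¹ • h • s (m (k + 1)) := by
    intro k hk
    obtain ⟨q', hq'π, -, hq'⟩ := hlift k hk
    obtain ⟨h, rfl⟩ := (hπ _ _).mp ((hs _ (hstep k hk).2).trans hq'π.symm)
    exact ⟨h, hq'⟩
  set g := g₀ * ((List.range N).map fun k => (A (s (m k)) (s (m (k + 1))))⁻¹).prod * g₀⁻¹
  have hqN : q N = g • qbar := by
    rw [horizontalLift_eq_prod_smul_section hAequiv s m q g₀ N (hq0.trans hqbar)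
      (fun k hk => (hstep k hk).1) hlift_section N le_rfl, hloop, hqbar, smul_smul,
      inv_mul_cancel_right]
  have hκg : κ qbar (q N) = g :=
    eq_of_smul_eq_smul_of_free hfree ((hκ _ _ ((hπ _ _).mpr ⟨g, hqN.symm⟩)).trans hqN)
  refine ⟨hκg, ?_⟩
  have hBA_eq : BA = curvature A := funext fun q₀ => funext fun q₁ => funext (hBA q₀ q₁)
  have hhor : ∀ k < N, A (q k) (q (k + 1)) = 1 := fun k hk => by
    obtain ⟨q', -, hU, hq'⟩ := hlift k hk
    rw [hq']
    exact apply_horizontalLift hAequiv hU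
  rw [hBA_eq, prod_curvature_inv_eq_of_horizontal A q (hAid _) N hhor, hκg, hqN, hq0,
    apply_smul_self hAequiv (hUvert qbar qbar rfl) (hAid qbar)]

/-- discrete holonomy phase formula.  For a discrete connection
form `A`, a section `s : V → P`, `N ≥ 2` and a discrete loop `m_•` with
`(m₀,m_k,m_{k+1}) ∈ V''⁽³⁾` for all `k`, if `q̄ = g₀ • s(m₀)` and `q_•` is the
discrete horizontal lift of `m_•` (with respect to `h_A`) starting at `q̄`, then
`HP(m_•,q̄) = κ(q̄, q_N) = g₀ · (∏_{k=1}^N A_s(m_{k-1},m_k)⁻¹) · g₀⁻¹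
            = ∏_{k=1}^{N−1} B_A(q₀,q_k,q_{k+1})⁻¹` (ordered products). -/
theorem discrete_holonomy_phase_formula
    {G : Type*} [Group G] {P : Type*} [MulAction G P] {B : Type*}
    (π : P → B)
    (hfree : ∀ (g : G) (q : P), g • q = q → g = 1)
    (hπ : ∀ q₀ q₁ : P, π q₀ = π q₁ ↔ ∃ g : G, g • q₀ = q₁)
    (κ : P → P → G)
    (hκ : ∀ q₀ q₁ : P, π q₀ = π q₁ → κ q₀ q₁ • q₀ = q₁)
    (U : Set (P × P))
    (hUinv : ∀ q₀ q₁ : P, (q₀, q₁) ∈ U → ∀ g₀ g₁ : G, (g₀ • q₀, g₁ • q₁) ∈ U)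
    (hUvert : ∀ q₀ q₁ : P, π q₀ = π q₁ → (q₀, q₁) ∈ U)
    (A : P → P → G)
    (hAid : ∀ q : P, A q q = 1)
    (hAequiv : ∀ q₀ q₁ : P, (q₀, q₁) ∈ U → ∀ g₀ g₁ : G,
      A (g₀ • q₀) (g₁ • q₁) = g₁ * A q₀ q₁ * g₀⁻¹)
    -- the curvature of `A`
    (BA : P → P → P → G)
    (hBA : ∀ q₀ q₁ q₂ : P, BA q₀ q₁ q₂ = (A q₀ q₂)⁻¹ * A q₁ q₂ * A q₀ q₁)
    (V : Set B) (s : B → P) (hs : ∀ m ∈ V, π (s m) = m)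
    (V'' : Set (B × B))
    (hV'' : V'' = {p : B × B | p.1 ∈ V ∧ p.2 ∈ V ∧ (s p.1, s p.2) ∈ U})
    -- a discrete loop `m_•` with all triples `(m₀, m_k, m_{k+1})` in `V''⁽³⁾`
    (N : ℕ) (hN : 2 ≤ N) (m : ℕ → B) (hloop : m N = m 0)
    (htr : ∀ k < N, ∀ x ∈ ({m 0, m k, m (k + 1)} : Set B),
      ∀ y ∈ ({m 0, m k, m (k + 1)} : Set B), (x, y) ∈ V'')
    -- `q̄ = g₀ • s(m₀)` and `q_•` is the discrete horizontal lift of `m_•`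
    -- (with respect to `h_A`) starting at `q̄`
    (g₀ : G) (qbar : P) (hqbar : qbar = g₀ • s (m 0))
    (q : ℕ → P) (hq0 : q 0 = qbar)
    (hlift : ∀ k < N, ∃ q' : P, π q' = m (k + 1) ∧ (q k, q') ∈ U ∧
      q (k + 1) = (A (q k) q')⁻¹ • q') :
    κ qbar (q N)
      = g₀ * (((List.range N).map
          (fun k => (A (s (m k)) (s (m (k + 1))))⁻¹)).prod) * g₀⁻¹ ∧
    κ qbar (q N)
      = ((List.range (N - 1)).map
          (fun k => (BA (q 0) (q (k + 1)) (q (k + 2)))⁻¹)).prod :=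
  discrete_holonomy_phase_formula_general π hfree hπ κ hκ U hUvert A hAid hAequiv BA hBA V s hs V''
    hV'' N m hloop htr g₀ qbar hqbar q hq0 hlift
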